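/- Global l.c.s. Hamilton–Jacobi theorem: Let (T*Q, Ω_θ, θ = π_Q^* ϑ) be an l.c.s. cotangent bundle, h a Hamiltonian function with Hamiltonian vector field X_h (ι_{X_h} Ω_θ = dh − hθ), and γ a 1-form on Q with d_ϑ γ = 0 (so Im γ is Lagrangian). Set X_h^γ = Tπ_Q ∘ X_h ∘ γ. Then Tγ ∘ X_h^γ = X_h ∘ γ if and only if d_ϑ(h ∘ γ) = 0. -/

import Mathlib

/- Differential forms on a normed space (a chart model):
   a 1-form is a map `E → (E →L[ℝ] ℝ)`, a 2-form a map `E → (E →L[ℝ] E →L[ℝ] ℝ)`.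
   The exterior derivative is defined through `fderiv`. -/

variable {E : Type*} [NormedAddCommGroup E] [NormedSpace ℝ E]

/-- Exterior derivative of a 1-form. -/
noncomputable def extD1 (α : E → (E →L[ℝ] ℝ)) (x : E) : E →L[ℝ] E →L[ℝ] ℝ :=
  fderiv ℝ α x - (fderiv ℝ α x).flip

/-- Exterior derivative of a 2-form, evaluated on three vectors. -/
noncomputable def extD2 (ω : E → (E →L[ℝ] E →L[ℝ] ℝ)) (x u v w : E) : ℝ :=
  fderiv ℝ ω x u v w - fderiv ℝ ω x v u w + fderiv ℝ ω x w u v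

/-- Wedge product of two covectors. -/
noncomputable def wedge11 (α β : E →L[ℝ] ℝ) : E →L[ℝ] E →L[ℝ] ℝ :=
  α.smulRight β - β.smulRight α

variable {F : Type*} [NormedAddCommGroup F] [NormedSpace ℝ F]

/-- The canonical Liouville one-form `Θ_Q` on `T*Q = F × F*`. -/
noncomputable def liouOne : F × (F →L[ℝ] ℝ) → ((F × (F →L[ℝ] ℝ)) →L[ℝ] ℝ) :=
  fun z => z.2.comp (ContinuousLinearMap.fst ℝ F (F →L[ℝ] ℝ))

/-- The pullback `θ = π_Q^* ϑ` of a one-form `ϑ` on `Q` to `T*Q`. -/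
noncomputable def thetaP (ϑ : F → (F →L[ℝ] ℝ)) :
    F × (F →L[ℝ] ℝ) → ((F × (F →L[ℝ] ℝ)) →L[ℝ] ℝ) :=
  fun z => (ϑ z.1).comp (ContinuousLinearMap.fst ℝ F (F →L[ℝ] ℝ))

/-- The l.c.s. two-form `Ω_θ = -dΘ_Q + θ ∧ Θ_Q` on `T*Q`. -/
noncomputable def OmegaTheta (ϑ : F → (F →L[ℝ] ℝ)) (z : F × (F →L[ℝ] ℝ)) :
    (F × (F →L[ℝ] ℝ)) →L[ℝ] (F × (F →L[ℝ] ℝ)) →L[ℝ] ℝ :=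
  -(extD1 liouOne z) + wedge11 (thetaP ϑ z) (liouOne z)

/-- `liouOne` as a continuous linear map. -/
noncomputable def liouCLM (F : Type*) [NormedAddCommGroup F] [NormedSpace ℝ F] :
    (F × (F →L[ℝ] ℝ)) →L[ℝ] ((F × (F →L[ℝ] ℝ)) →L[ℝ] ℝ) :=
  ((ContinuousLinearMap.compL ℝ (F × (F →L[ℝ] ℝ)) F ℝ).flip
      (ContinuousLinearMap.fst ℝ F (F →L[ℝ] ℝ))).comp
    (ContinuousLinearMap.snd ℝ F (F →L[ℝ] ℝ))

lemma liouOne_eq_clm : (liouOne : F × (F →L[ℝ] ℝ) → _) = ⇑(liouCLM F) := rfl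

set_option maxHeartbeats 1000000 in
lemma fderiv_liouOne (z : F × (F →L[ℝ] ℝ)) :
    fderiv ℝ (liouOne : F × (F →L[ℝ] ℝ) → _) z = liouCLM F := by
  rw [liouOne_eq_clm]
  exact ContinuousLinearMap.fderiv _

lemma extD1_liouOne (z a b : F × (F →L[ℝ] ℝ)) :
    extD1 liouOne z a b = a.2 b.1 - b.2 a.1 := by
  simp [extD1, fderiv_liouOne, liouCLM]

lemma OmegaTheta_apply (ϑ : F → (F →L[ℝ] ℝ)) (z a b : F × (F →L[ℝ] ℝ)) :
    OmegaTheta ϑ z a b =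
      b.2 a.1 - a.2 b.1 + (ϑ z.1 a.1 * z.2 b.1 - z.2 a.1 * ϑ z.1 b.1) := by
  show -(extD1 liouOne z a b) + wedge11 (thetaP ϑ z) (liouOne z) a b = _
  simp [OmegaTheta, wedge11, thetaP, liouOne, extD1_liouOne]

/-- global l.c.s. Hamilton–Jacobi theorem: on the l.c.s. cotangent
bundle `(T*Q, Ω_θ, θ = π_Q^* ϑ)`, let `h` be a Hamiltonian with Hamiltonian vector
field `X_h` (`ι_{X_h} Ω_θ = dh - hθ`) and `γ` a one-form on `Q` with
`d_ϑ γ = 0` (so `Im γ` is Lagrangian).  With `X_h^γ = Tπ_Q ∘ X_h ∘ γ`, the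
condition `Tγ ∘ X_h^γ = X_h ∘ γ` holds iff `d_ϑ(h ∘ γ) = 0`. -/
theorem lcs_hamilton_jacobi_global
    (ϑ : F → (F →L[ℝ] ℝ)) (hϑ : ContDiff ℝ (⊤ : ℕ∞) ϑ)
    -- ϑ is closed
    (hclosed : ∀ q u v, extD1 ϑ q u v = 0)
    (h : F × (F →L[ℝ] ℝ) → ℝ) (hh : ContDiff ℝ (⊤ : ℕ∞) h)
    (X : F × (F →L[ℝ] ℝ) → F × (F →L[ℝ] ℝ))
    -- `ι_{X_h} Ω_θ = dh - hθ`
    (hX : ∀ z U, OmegaTheta ϑ z (X z) U = fderiv ℝ h z U - h z * thetaP ϑ z U)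
    (γ : F → (F →L[ℝ] ℝ)) (hγ : ContDiff ℝ (⊤ : ℕ∞) γ)
    -- `d_ϑ γ = 0`, i.e. the image of the section `q ↦ (q, γ q)` is Lagrangian
    (hLag : ∀ q u v, extD1 γ q u v - (ϑ q u * γ q v - ϑ q v * γ q u) = 0) :
    -- `Tγ ∘ X_h^γ = X_h ∘ γ` ↔ `d_ϑ (h ∘ γ) = 0`,
    -- where `X_h^γ q = Tπ_Q (X_h (γ q)) = (X (q, γ q)).1`
    (∀ q : F,
        fderiv ℝ (fun q' : F => ((q', γ q') : F × (F →L[ℝ] ℝ))) q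
            ((X (q, γ q)).1) =
          X (q, γ q)) ↔
    (∀ (q : F) (u : F),
        fderiv ℝ (fun q' : F => h (q', γ q')) q u - h (q, γ q) * ϑ q u = 0) := by
  -- derivative of the section q ↦ (q, γ q)
  have hsec : ∀ q : F, HasFDerivAt (fun q' : F => ((q', γ q') : F × (F →L[ℝ] ℝ)))
      ((ContinuousLinearMap.id ℝ F).prod (fderiv ℝ γ q)) q := fun q =>
    HasFDerivAt.prodMk (hasFDerivAt_id q) ((hγ.differentiable (by simp) q).hasFDerivAt)
  have hcomp : ∀ (q : F) (u : F),
      fderiv ℝ (fun q' : F => h (q', γ q')) q u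
        = fderiv ℝ h (q, γ q) (u, fderiv ℝ γ q u) := by
    intro q u
    have := ((hh.differentiable (by simp) (q, γ q)).hasFDerivAt.comp q (hsec q)).fderiv
    rw [show (fun q' : F => h (q', γ q')) = h ∘ (fun q' : F => ((q', γ q') : F × (F →L[ℝ] ℝ))) from rfl, this]
    rfl
  -- Statement (1) rewritten
  have h1 : ∀ q : F,
      (fderiv ℝ (fun q' : F => ((q', γ q') : F × (F →L[ℝ] ℝ))) q ((X (q, γ q)).1)
        = X (q, γ q)) ↔ fderiv ℝ γ q ((X (q, γ q)).1) = (X (q, γ q)).2 := by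
    intro q
    rw [(hsec q).fderiv]
    constructor
    · intro hq
      have := congrArg Prod.snd hq
      simpa using this
    · intro hq
      ext <;> simp [hq]
  -- Statement (2) rewritten via the Hamiltonian condition and the Lagrangian condition
  have h2 : ∀ (q u : F),
      (fderiv ℝ (fun q' : F => h (q', γ q')) q u - h (q, γ q) * ϑ q u)
        = fderiv ℝ γ q ((X (q, γ q)).1) u - (X (q, γ q)).2 u := by
    intro q u
    have hXz := hX (q, γ q) (u, fderiv ℝ γ q u)
    rw [hcomp q u]
    have hθ : thetaP ϑ (q, γ q) (u, fderiv ℝ γ q u) = ϑ q u := rfl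
    rw [hθ] at hXz
    have hΩ := OmegaTheta_apply ϑ (q, γ q) (X (q, γ q)) (u, fderiv ℝ γ q u)
    have hL := hLag q u ((X (q, γ q)).1)
    simp only [extD1, ContinuousLinearMap.sub_apply, ContinuousLinearMap.flip_apply,
      sub_eq_zero] at hL
    -- hL : fderiv γ q u (X.1) - fderiv γ q (X.1) u = ϑ q u * γ q (X.1) - ϑ q (X.1) * γ q u
    have : fderiv ℝ h (q, γ q) (u, fderiv ℝ γ q u) - h (q, γ q) * ϑ q u
        = OmegaTheta ϑ (q, γ q) (X (q, γ q)) (u, fderiv ℝ γ q u) := by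
      rw [hXz]
    rw [this, hΩ]
    simp only
    linarith [hL]
  constructor
  · intro H q u
    rw [h2 q u, (h1 q).mp (H q)]
    exact sub_self _
  · intro H q
    rw [h1 q]
    ext u
    have := H q u
    rw [h2 q u] at this
    linarith
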